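/- Zero is a regular value of the moment map μ : Π_{j=1}^n S²_{r_j} → R³, μ(e_1,...,e_n) = e_1 + ⋯ + e_n, provided ε_I(r) ≠ 0 for every I ⊆ {1,...,n}; more precisely, the differential of μ at a point x fails to be surjective only when all the e_j are parallel to a common line through the origin. -/

import Mathlib

open Finset

def eps {n : ℕ} (r : Fin n → ℝ) (I : Finset (Fin n)) : ℝ :=
  ∑ i ∈ I, r i - ∑ i ∈ Iᶜ, r i

/-- Euclidean dot product on `ℝ³`. -/
def dot3 (p q : ℝ × ℝ × ℝ) : ℝ := p.1 * q.1 + p.2.1 * q.2.1 + p.2.2 * q.2.2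

/-- Cross product on `ℝ³`. -/
def cross3 (p q : ℝ × ℝ × ℝ) : ℝ × ℝ × ℝ :=
  (p.2.1 * q.2.2 - p.2.2 * q.2.1, p.2.2 * q.1 - p.1 * q.2.2, p.1 * q.2.1 - p.2.1 * q.1)

lemma dot3_zero_right (p : ℝ × ℝ × ℝ) : dot3 p 0 = 0 := by
  simp [dot3]

lemma dot3_add_right (p a b : ℝ × ℝ × ℝ) : dot3 p (a + b) = dot3 p a + dot3 p b := by
  simp [dot3, Prod.fst_add, Prod.snd_add]; ring

lemma dot3_smul_right (p : ℝ × ℝ × ℝ) (t : ℝ) (a : ℝ × ℝ × ℝ) :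
    dot3 p (t • a) = t * dot3 p a := by
  simp [dot3, Prod.smul_def, smul_eq_mul]; ring

lemma dot3_smul_smul (t : ℝ) (v : ℝ × ℝ × ℝ) :
    dot3 (t • v) (t • v) = t ^ 2 * dot3 v v := by
  simp [dot3, Prod.smul_def, smul_eq_mul]; ring

lemma dot3_self_eq_zero {p : ℝ × ℝ × ℝ} (h : dot3 p p = 0) : p = 0 := by
  unfold dot3 at h
  have h1 : p.1 = 0 := by nlinarith [sq_nonneg p.1, sq_nonneg p.2.1, sq_nonneg p.2.2]
  have h2 : p.2.1 = 0 := by nlinarith [sq_nonneg p.1, sq_nonneg p.2.1, sq_nonneg p.2.2]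
  have h3 : p.2.2 = 0 := by nlinarith [sq_nonneg p.1, sq_nonneg p.2.1, sq_nonneg p.2.2]
  exact Prod.ext h1 (Prod.ext h2 h3)

lemma dot3_self_pos {p : ℝ × ℝ × ℝ} (h : p ≠ 0) : 0 < dot3 p p := by
  have hne : dot3 p p ≠ 0 := fun hc => h (dot3_self_eq_zero hc)
  have : 0 ≤ dot3 p p := by unfold dot3; nlinarith [sq_nonneg p.1, sq_nonneg p.2.1, sq_nonneg p.2.2]
  exact lt_of_le_of_ne this (Ne.symm hne)

lemma cross3_self (a : ℝ × ℝ × ℝ) : cross3 a a = 0 := by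
  simp [cross3, Prod.ext_iff]; constructor <;> [skip; constructor] <;> ring

lemma dot3_cross_left (a x : ℝ × ℝ × ℝ) : dot3 a (cross3 a x) = 0 := by
  simp [dot3, cross3]; ring

lemma dot3_cross_cross (a b : ℝ × ℝ × ℝ) :
    dot3 b (cross3 a (cross3 a b)) = - dot3 (cross3 a b) (cross3 a b) := by
  simp [dot3, cross3]; ring

/-- If `cross3 a b = 0` and `a ≠ 0` then `b` is a multiple of `a`. -/
lemma collinear_of_cross_eq_zero {a b : ℝ × ℝ × ℝ} (ha : dot3 a a ≠ 0)
    (h : cross3 a b = 0) : b = (dot3 a b / dot3 a a) • a := by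
  have h1 : a.2.1 * b.2.2 - a.2.2 * b.2.1 = 0 := congrArg Prod.fst h
  have h2 : a.2.2 * b.1 - a.1 * b.2.2 = 0 := congrArg (fun p => p.2.1) h
  have h3 : a.1 * b.2.1 - a.2.1 * b.1 = 0 := congrArg (fun p => p.2.2) h
  unfold dot3 at ha ⊢
  refine Prod.ext ?_ (Prod.ext ?_ ?_) <;>
      simp only [Prod.smul_def, smul_eq_mul] <;> rw [div_mul_eq_mul_div, eq_div_iff ha]
  · linear_combination (-(a.2.1)) * h3 + a.2.2 * h2
  · linear_combination a.1 * h3 - a.2.2 * h1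
  · linear_combination (-(a.1)) * h2 + a.2.1 * h1

/-- The differential of the moment map `μ(e) = ∑ e_j` on the product of spheres, at a
configuration `e`, is the map sending a tangent vector `w` (i.e. `w j ⟂ e j` for all `j`)
to `∑ w j`.  It fails to be surjective only when all the `e_j` lie on a common line
through the origin; in particular if `ε_I(r) ≠ 0` for all `I`, it is surjective at every
point of the zero level set, i.e. `0` is a regular value of `μ`. -/
theorem stmt_5 {n : ℕ} (r : Fin n → ℝ) (hr : ∀ i, 0 < r i)
    (e : Fin n → ℝ × ℝ × ℝ) (hsph : ∀ j, dot3 (e j) (e j) = r j ^ 2) :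
    ((¬ ∃ v : ℝ × ℝ × ℝ, v ≠ 0 ∧ ∀ j, ∃ t : ℝ, e j = t • v) →
      Function.Surjective
        (fun w : {w : Fin n → ℝ × ℝ × ℝ // ∀ j, dot3 (e j) (w j) = 0} => ∑ j, w.1 j)) ∧
    ((∀ I : Finset (Fin n), eps r I ≠ 0) → (∑ j, e j = 0) →
      Function.Surjective
        (fun w : {w : Fin n → ℝ × ℝ × ℝ // ∀ j, dot3 (e j) (w j) = 0} => ∑ j, w.1 j)) := by
  have key : (¬ ∃ v : ℝ × ℝ × ℝ, v ≠ 0 ∧ ∀ j, ∃ t : ℝ, e j = t • v) →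
      Function.Surjective
        (fun w : {w : Fin n → ℝ × ℝ × ℝ // ∀ j, dot3 (e j) (w j) = 0} => ∑ j, w.1 j) := by
    intro hnc p
    -- find two non-parallel vectors
    have hex : ∃ j k, cross3 (e j) (e k) ≠ 0 := by
      by_contra hcon
      push_neg at hcon
      apply hnc
      rcases Nat.eq_zero_or_pos n with h0 | h0
      · subst h0
        exact ⟨(1, 0, 0), by simp [Prod.ext_iff], fun j => j.elim0⟩
      · set j0 : Fin n := ⟨0, h0⟩
        have hne : dot3 (e j0) (e j0) ≠ 0 := by
          rw [hsph j0]; exact pow_ne_zero 2 (hr j0).ne'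
        have hv0 : e j0 ≠ 0 := by
          intro hc
          apply hne
          rw [hc]; simp [dot3]
        exact ⟨e j0, hv0, fun k =>
          ⟨dot3 (e j0) (e k) / dot3 (e j0) (e j0),
            collinear_of_cross_eq_zero hne (hcon j0 k)⟩⟩
    obtain ⟨j, k, hc⟩ := hex
    have hjk : j ≠ k := by
      intro h; subst h; exact hc (cross3_self (e j))
    set c : ℝ × ℝ × ℝ := cross3 (e j) (e k) with hcdef
    have hs : dot3 c c ≠ 0 := fun h => hc (dot3_self_eq_zero h)
    set a : ℝ × ℝ × ℝ := (-(dot3 (e k) p) / dot3 c c) • cross3 (e j) c with hadef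
    have haj : dot3 (e j) a = 0 := by
      rw [hadef, dot3_smul_right, dot3_cross_left]; ring
    have hcc : dot3 (e k) (cross3 (e j) c) = - dot3 c c := by
      rw [hcdef]; exact dot3_cross_cross _ _
    have hak : dot3 (e k) a = dot3 (e k) p := by
      rw [hadef, dot3_smul_right, hcc]
      field_simp
    set w : Fin n → ℝ × ℝ × ℝ :=
      fun i => (if i = j then a else 0) + (if i = k then p - a else 0) with hwdef
    have hw : ∀ i, dot3 (e i) (w i) = 0 := by
      intro i
      simp only [hwdef]
      by_cases hij : i = j
      · subst hij
        rw [if_pos rfl, if_neg hjk, add_zero]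
        exact haj
      · by_cases hik : i = k
        · subst hik
          rw [if_neg hij, if_pos rfl, zero_add]
          have hsub : dot3 (e i) (p - a) = dot3 (e i) p - dot3 (e i) a := by
            have h := dot3_add_right (e i) (p - a) a
            rw [sub_add_cancel] at h
            linarith
          rw [hsub, hak]; ring
        · rw [if_neg hij, if_neg hik, add_zero, dot3_zero_right]
    refine ⟨⟨w, hw⟩, ?_⟩
    simp only [hwdef]
    rw [Finset.sum_add_distrib, Finset.sum_ite_eq' univ j (fun _ => a),
      Finset.sum_ite_eq' univ k (fun _ => p - a)]
    simp
  refine ⟨key, fun hI hsum => key ?_⟩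
  rintro ⟨v, hv, htl⟩
  choose t ht using htl
  have hvv : 0 < dot3 v v := dot3_self_pos hv
  set s : ℝ := Real.sqrt (dot3 v v) with hsdef
  have hs2 : s ^ 2 = dot3 v v := Real.sq_sqrt hvv.le
  have hspos : 0 < s := Real.sqrt_pos.mpr hvv
  have hts : ∀ j, (t j * s) ^ 2 = r j ^ 2 := by
    intro j
    have := hsph j
    rw [ht j, dot3_smul_smul] at this
    nlinarith [this, hs2]
  have htsum : ∑ j, t j = 0 := by
    have : (∑ j, t j) • v = 0 := by
      rw [Finset.sum_smul, ← hsum]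
      exact Finset.sum_congr rfl fun j _ => (ht j).symm
    rcases smul_eq_zero.mp this with h | h
    · exact h
    · exact absurd h hv
  set I : Finset (Fin n) := univ.filter (fun j => 0 ≤ t j) with hIdef
  apply hI I
  have hIval : ∀ j ∈ I, t j * s = r j := by
    intro j hj
    have htj : 0 ≤ t j := (Finset.mem_filter.mp hj).2
    have h2 := hts j
    have : (t j * s - r j) * (t j * s + r j) = 0 := by ring_nf; nlinarith [h2]
    rcases mul_eq_zero.mp this with h | h
    · linarith
    · nlinarith [hr j, mul_nonneg htj hspos.le]
  have hIcval : ∀ j ∈ Iᶜ, t j * s = - r j := by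
    intro j hj
    have htj : ¬ 0 ≤ t j := by
      simpa [hIdef] using (Finset.mem_compl.mp hj)
    push_neg at htj
    have h2 := hts j
    have : (t j * s - r j) * (t j * s + r j) = 0 := by ring_nf; nlinarith [h2]
    rcases mul_eq_zero.mp this with h | h
    · nlinarith [hr j, mul_neg_of_neg_of_pos htj hspos]
    · linarith
  have : eps r I = ∑ j, t j * s := by
    rw [eps, ← Finset.sum_congr rfl hIval]
    have : ∑ j ∈ Iᶜ, r j = - ∑ j ∈ Iᶜ, (t j * s) := by
      rw [← Finset.sum_neg_distrib]
      exact Finset.sum_congr rfl fun j hj => by rw [hIcval j hj]; ring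
    rw [this, ← Finset.sum_add_sum_compl I (fun j => t j * s)]
    ring
  rw [this, ← Finset.sum_mul, htsum, zero_mul]
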